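/- arXiv:1905.05406 — 6 statements merged into one kernel-verified Lean document; each statement's English description precedes it below -/
import Mathlib

section
/- Let f : ℝ^d → ℝ be differentiable, μ-strongly convex with L-Lipschitz gradient, where 0 < μ ≤ L and α > 0. Then for all x, y ∈ ℝ^d: ‖(x - α∇f(x)) - (y - α∇f(y))‖ ≤ max{|1 - αμ|, |1 - αL|} · ‖x - y‖. -/
/-!
Write `h = f - (μ/2)‖·‖²`, which is convex with gradient `G = g - μ • id`. Since
`⟪G a - G b, a - b⟫ ≤ (L - μ)‖a - b‖²`, `h` satisfies the descent inequality with constant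
`C = L - μ`; together with convexity this makes `G` cocoercive (Baillon–Haddad):
`‖G x - G y‖² ≤ C ⟪G x - G y, x - y⟫`, i.e. `N = 2G - C • id` is `C`-Lipschitz.
With `a = 1 - αμ` and `b = 1 - αL = a - αC`, the gradient step is
`x - α g x = ((a + b)/2) x - (α/2) N x`, whose Lipschitz constant is at most
`|a + b|/2 + (a - b)/2 ≤ max |a| |b|`.
-/

open Set
open scoped RealInnerProductSpace

lemma abs_add_div_two_add_sub_div_two_le_max (a b : ℝ) :
    |a + b| / 2 + (a - b) / 2 ≤ max |a| |b| := by
  rcases abs_cases (a + b) with ⟨h, _⟩ | ⟨h, _⟩ <;> rw [h]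
  · linarith [le_abs_self a, le_max_left |a| |b|]
  · linarith [neg_le_abs b, le_max_right |a| |b|]

lemma le_mul_of_forall_mul_two_sub_mul_le {q p C : ℝ} (hC : 0 ≤ C)
    (h : ∀ s, s * (2 - C * s) * q ≤ p) : q ≤ C * p := by
  rcases hC.eq_or_lt with rfl | hC
  · by_contra! hq
    rw [zero_mul] at hq
    have hs := h ((p + 1) / (2 * q))
    field_simp at hs
    linarith
  · have hs := h C⁻¹
    rw [mul_inv_cancel₀ hC.ne'] at hs
    rw [← inv_mul_le_iff₀ hC]
    linarith

section InnerProductSpace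

variable {E : Type*} [NormedAddCommGroup E] [InnerProductSpace ℝ E]

lemma norm_smul_sub_smul_le_max {u v : E} {a α C : ℝ} (hα : 0 ≤ α) (hC : 0 ≤ C)
    (huv : ‖u‖ ^ 2 ≤ C * ⟪u, v⟫) :
    ‖a • v - α • u‖ ≤ max |a| |a - α * C| * ‖v‖ := by
  have hN : ‖(2 : ℝ) • u - C • v‖ ≤ C * ‖v‖ := by
    refine le_of_sq_le_sq ?_ (by positivity)
    rw [norm_sub_sq_real, norm_smul, norm_smul, real_inner_smul_left, real_inner_smul_right,
      Real.norm_of_nonneg hC, Real.norm_two]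
    nlinarith
  calc ‖a • v - α • u‖
      = ‖((a + (a - α * C)) / 2) • v - (α / 2) • ((2 : ℝ) • u - C • v)‖ := by
        congr 1; module
    _ ≤ |a + (a - α * C)| / 2 * ‖v‖ + α / 2 * (C * ‖v‖) := by
        refine (norm_sub_le _ _).trans ?_
        rw [norm_smul, norm_smul, Real.norm_eq_abs, Real.norm_of_nonneg (by positivity), abs_div,
          abs_two]
        gcongr
    _ = (|a + (a - α * C)| / 2 + (a - (a - α * C)) / 2) * ‖v‖ := by ring
    _ ≤ max |a| |a - α * C| * ‖v‖ := by
        gcongr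
        exact abs_add_div_two_add_sub_div_two_le_max _ _

variable [CompleteSpace E] {f : E → ℝ} {G : E → E} {C : ℝ}

lemma HasGradientAt.sub_half_mul_norm_sq {f' x : E} (hf : HasGradientAt f f' x) (μ : ℝ) :
    HasGradientAt (fun z => f z - μ / 2 * ‖z‖ ^ 2) (f' - μ • x) x := by
  rw [hasGradientAt_iff_hasFDerivAt] at hf ⊢
  refine (hf.sub ((hasStrictFDerivAt_norm_sq x).hasFDerivAt.const_mul (μ / 2))).congr_fderiv ?_
  ext w
  simp only [sub_apply, smul_apply, InnerProductSpace.toDual_apply_apply, innerSL_apply_apply,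
    map_sub, map_smul, smul_eq_mul, nsmul_eq_mul, Nat.cast_ofNat]
  ring

lemma HasGradientAt.hasDerivAt_comp_add_smul {f' x v : E} {t : ℝ}
    (hf : HasGradientAt f f' (x + t • v)) :
    HasDerivAt (fun s : ℝ => f (x + s • v)) ⟪f', v⟫ t := by
  have hline : HasDerivAt (fun s : ℝ => x + s • v) v t := by
    simpa using ((hasDerivAt_id t).smul_const v).const_add x
  exact (by simpa using hf.hasFDerivAt.comp_hasDerivAt t hline :
    HasDerivAt (f ∘ fun s : ℝ => x + s • v) ⟪f', v⟫ t)

lemma ConvexOn.add_inner_le_of_hasGradientAt {f' x : E} (hf : ConvexOn ℝ univ f)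
    (hx : HasGradientAt f f' x) (y : E) : f x + ⟪f', y - x⟫ ≤ f y := by
  have hline : ConvexOn ℝ univ (fun t : ℝ => f (x + t • (y - x))) := by
    simpa [Function.comp_def, AffineMap.lineMap_apply, add_comm] using
      hf.comp_affineMap (AffineMap.lineMap x y : ℝ →ᵃ[ℝ] E)
  have hderiv : HasDerivAt (fun t : ℝ => f (x + t • (y - x))) ⟪f', y - x⟫ 0 :=
    HasGradientAt.hasDerivAt_comp_add_smul (by simpa using hx)
  have := hline.le_slope_of_hasDerivAt (mem_univ 0) (mem_univ 1) one_pos hderiv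
  simp only [slope_def_field, zero_smul, add_zero, one_smul, add_sub_cancel, sub_zero,
    div_one] at this
  linarith

lemma le_add_inner_add_of_inner_sub_le (hG : ∀ z, HasGradientAt f (G z) z)
    (hmono : ∀ a b, ⟪G a - G b, a - b⟫ ≤ C * ‖a - b‖ ^ 2) (x y : E) :
    f y ≤ f x + ⟪G x, y - x⟫ + C / 2 * ‖y - x‖ ^ 2 := by
  set v := y - x
  have hderiv (t : ℝ) : HasDerivAt (fun t : ℝ => f (x + t • v)) ⟪G (x + t • v), v⟫ t :=
    (hG _).hasDerivAt_comp_add_smul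
  have hbound (t : ℝ) : HasDerivAt (fun t : ℝ => f x + t * ⟪G x, v⟫ + C / 2 * ‖v‖ ^ 2 * t ^ 2)
      (⟪G x, v⟫ + C * ‖v‖ ^ 2 * t) t := by
    refine ((((hasDerivAt_id' t).mul_const ⟪G x, v⟫).const_add (f x)).add
      ((hasDerivAt_pow 2 t).const_mul (C / 2 * ‖v‖ ^ 2))).congr_deriv ?_
    ring
  have hslope (t : ℝ) (ht : t ∈ Ico (0 : ℝ) 1) :
      ⟪G (x + t • v), v⟫ ≤ ⟪G x, v⟫ + C * ‖v‖ ^ 2 * t := by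
    rcases ht.1.eq_or_lt with rfl | ht0
    · simp
    have := hmono (x + t • v) x
    rw [add_sub_cancel_left, inner_smul_right, norm_smul, Real.norm_of_nonneg ht0.le,
      inner_sub_left] at this
    nlinarith
  have := image_le_of_deriv_right_le_deriv_boundary (a := 0) (b := 1)
    (fun t _ => (hderiv t).continuousAt.continuousWithinAt)
    (fun t _ => (hderiv t).hasDerivWithinAt) (by simp)
    (fun t _ => (hbound t).continuousAt.continuousWithinAt)
    (fun t _ => (hbound t).hasDerivWithinAt) hslope (right_mem_Icc.2 zero_le_one)
  simpa [v] using this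

lemma ConvexOn.norm_sub_sq_le_mul_inner (hC : 0 ≤ C) (hf : ConvexOn ℝ univ f)
    (hG : ∀ z, HasGradientAt f (G z) z)
    (hdesc : ∀ x y, f y ≤ f x + ⟪G x, y - x⟫ + C / 2 * ‖y - x‖ ^ 2) (x y : E) :
    ‖G x - G y‖ ^ 2 ≤ C * ⟪G x - G y, x - y⟫ := by
  -- compare the tangent plane at `b` with the descent bound at `a`, at the point `a - s • u`
  have key (a b : E) (s : ℝ) :
      s * ‖G a - G b‖ ^ 2 - C / 2 * s ^ 2 * ‖G a - G b‖ ^ 2 ≤ f a - f b - ⟪G b, a - b⟫ := by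
    set u := G a - G b
    have htangent := hf.add_inner_le_of_hasGradientAt (hG b) (a - s • u)
    have hdescent := hdesc a (a - s • u)
    rw [sub_sub_cancel_left, norm_neg, norm_smul, Real.norm_eq_abs, mul_pow, sq_abs,
      inner_neg_right, real_inner_smul_right] at hdescent
    rw [sub_right_comm, inner_sub_right, real_inner_smul_right] at htangent
    have hu : s * ⟪G a, u⟫ - s * ⟪G b, u⟫ = s * ‖u‖ ^ 2 := by
      rw [← mul_sub, ← inner_sub_left, real_inner_self_eq_norm_sq]
    linarith
  refine le_mul_of_forall_mul_two_sub_mul_le hC fun s => ?_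
  have hxy := key x y s
  have hyx := key y x s
  rw [norm_sub_rev (G y), ← neg_sub x y, inner_neg_right] at hyx
  rw [inner_sub_left]
  linarith

end InnerProductSpace

theorem grad_step_contraction_general {d : ℕ}
    (f : EuclideanSpace ℝ (Fin d) → ℝ)
    (g : EuclideanSpace ℝ (Fin d) → EuclideanSpace ℝ (Fin d))
    (μ L α : ℝ) (hμL : μ ≤ L) (hα : 0 < α)
    (hgrad : ∀ x, HasGradientAt f (g x) x)
    (hsc : ConvexOn ℝ Set.univ (fun x => f x - μ / 2 * ‖x‖ ^ 2))
    (hlip : ∀ x y, ‖g x - g y‖ ≤ L * ‖x - y‖) :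
    ∀ x y, ‖(x - α • g x) - (y - α • g y)‖ ≤
      max |1 - α * μ| |1 - α * L| * ‖x - y‖ := by
  intro x y
  have hG z := (hgrad z).sub_half_mul_norm_sq μ
  have hmono (a b : EuclideanSpace ℝ (Fin d)) :
      ⟪(g a - μ • a) - (g b - μ • b), a - b⟫ ≤ (L - μ) * ‖a - b‖ ^ 2 := by
    calc ⟪(g a - μ • a) - (g b - μ • b), a - b⟫ = ⟪g a - g b, a - b⟫ - μ * ‖a - b‖ ^ 2 := by
          rw [sub_sub_sub_comm, ← smul_sub, inner_sub_left, real_inner_smul_left,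
            real_inner_self_eq_norm_sq]
      _ ≤ ‖g a - g b‖ * ‖a - b‖ - μ * ‖a - b‖ ^ 2 := by gcongr; exact real_inner_le_norm _ _
      _ ≤ (L - μ) * ‖a - b‖ ^ 2 := by nlinarith [hlip a b, norm_nonneg (a - b)]
  have hcoco := hsc.norm_sub_sq_le_mul_inner (sub_nonneg.2 hμL) hG
    (le_add_inner_add_of_inner_sub_le hG hmono) x y
  calc ‖(x - α • g x) - (y - α • g y)‖
      = ‖(1 - α * μ) • (x - y) - α • ((g x - μ • x) - (g y - μ • y))‖ := by congr 1; module
    _ ≤ max |1 - α * μ| |1 - α * μ - α * (L - μ)| * ‖x - y‖ :=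
        norm_smul_sub_smul_le_max hα.le (sub_nonneg.2 hμL) hcoco
    _ = max |1 - α * μ| |1 - α * L| * ‖x - y‖ := by ring_nf

theorem grad_step_contraction {d : ℕ}
    (f : EuclideanSpace ℝ (Fin d) → ℝ)
    (g : EuclideanSpace ℝ (Fin d) → EuclideanSpace ℝ (Fin d))
    (μ L α : ℝ) (hμ : 0 < μ) (hμL : μ ≤ L) (hα : 0 < α)
    (hgrad : ∀ x, HasGradientAt f (g x) x)
    (hsc : ConvexOn ℝ Set.univ (fun x => f x - μ / 2 * ‖x‖ ^ 2))
    (hlip : ∀ x y, ‖g x - g y‖ ≤ L * ‖x - y‖) :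
    ∀ x y, ‖(x - α • g x) - (y - α • g y)‖ ≤
      max |1 - α * μ| |1 - α * L| * ‖x - y‖ :=
  grad_step_contraction_general f g μ L α hμL hα hgrad hsc hlip
end

section
/- Let H : ℝ^d → ℝ^d and ε ≥ 0. Then H satisfies ‖(H - I)(x) - (H - I)(y)‖² ≤ ε²‖x - y‖² for all x, y if and only if (1/(1+ε))H is ε/(1+ε)-averaged. -/
open scoped RealInnerProductSpace

/-- θ-averagedness, characterized by the inner-product inequality
(Proposition 4.35 of Bauschke–Combettes). -/
def Averaged {d : ℕ} (θ : ℝ) (G : EuclideanSpace ℝ (Fin d) → EuclideanSpace ℝ (Fin d)) : Prop :=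
  ∀ x y, ‖G x - G y‖ ^ 2 + (1 - 2 * θ) * ‖x - y‖ ^ 2 ≤
    2 * (1 - θ) * ⟪G x - G y, x - y⟫

theorem assumptionA_iff_averaged {d : ℕ}
    (H : EuclideanSpace ℝ (Fin d) → EuclideanSpace ℝ (Fin d))
    (ε : ℝ) (hε : 0 ≤ ε) :
    (∀ x y, ‖(H x - x) - (H y - y)‖ ^ 2 ≤ ε ^ 2 * ‖x - y‖ ^ 2) ↔
      Averaged (ε / (1 + ε)) (fun x => (1 / (1 + ε)) • H x) := by
  have hpos : (0:ℝ) < 1 + ε := by linarith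
  unfold Averaged
  refine forall₂_congr fun x y => ?_
  have e1 : (H x - x) - (H y - y) = (H x - H y) - (x - y) := by abel
  have e2 : ‖(H x - x) - (H y - y)‖ ^ 2
      = ‖H x - H y‖ ^ 2 - 2 * ⟪H x - H y, x - y⟫ + ‖x - y‖ ^ 2 := by
    rw [e1, @norm_sub_sq_real]
  have e3 : (1 / (1 + ε)) • H x - (1 / (1 + ε)) • H y = (1 / (1 + ε)) • (H x - H y) :=
    (smul_sub _ _ _).symm
  have e4 : ‖(1 / (1 + ε)) • (H x - H y)‖ ^ 2 = (1 / (1 + ε)) ^ 2 * ‖H x - H y‖ ^ 2 := by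
    rw [norm_smul, mul_pow, Real.norm_eq_abs, sq_abs]
  have e5 : ⟪(1 / (1 + ε)) • (H x - H y), x - y⟫
      = (1 / (1 + ε)) * ⟪H x - H y, x - y⟫ := real_inner_smul_left _ _ _
  simp only [e3, e4, e5, e2]
  have hne : (1 + ε) ≠ 0 := ne_of_gt hpos
  have hc : (1 / (1 + ε)) * (1 + ε) = 1 := by field_simp
  have hθ : ε / (1 + ε) = 1 - 1 / (1 + ε) := by field_simp; ring
  rw [hθ]
  set c := 1 / (1 + ε) with hcdef
  have hcpos : 0 < c := by positivity
  have hεc : ε * c = 1 - c := by nlinarith [hc]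
  have hεc2 : ε ^ 2 * c ^ 2 = (1 - c) ^ 2 := by
    calc ε ^ 2 * c ^ 2 = (ε * c) ^ 2 := by ring
    _ = (1 - c) ^ 2 := by rw [hεc]
  constructor <;> intro h
  · nlinarith [mul_le_mul_of_nonneg_left h (sq_nonneg c), hεc2]
  · nlinarith [h, hεc2, mul_pos hcpos hcpos]
end

section
/- Let H : ℝ^d → ℝ^d and ε ≥ 0. Then H satisfies ‖(H - I)(x) - (H - I)(y)‖² ≤ ε²‖x - y‖² for all x, y if and only if (1/(1+2ε))(2H - I) is 2ε/(1+2ε)-averaged. -/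
open scoped RealInnerProductSpace

/-! Write `c = 1 + 2ε`, `G = c⁻¹ (2H - I)`, `w = (H - I) x - (H - I) y` and `v = x - y`, so that
`G x - G y = c⁻¹ (2w + v)` and `θ = 2ε / c` satisfies `1 - θ = 1 / c`. Expanding the squares, the
slack `2(1 - θ)⟪G x - G y, v⟫ - ‖G x - G y‖² - (1 - 2θ)‖v‖²` of the averagedness inequality is
exactly `(2 / c)² (ε²‖v‖² - ‖w‖²)`, so for `c > 0` the two inequalities hold for the same pairs. -/

section InnerProductSpace

variable {E : Type*} [NormedAddCommGroup E] [InnerProductSpace ℝ E]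

lemma averaged_slack_eq_of_reflection (ε : ℝ) (hc : 1 + 2 * ε ≠ 0) (w v : E) :
    2 * (1 - 2 * ε / (1 + 2 * ε)) * ⟪(1 / (1 + 2 * ε)) • ((2 : ℝ) • w + v), v⟫
        - (‖(1 / (1 + 2 * ε)) • ((2 : ℝ) • w + v)‖ ^ 2
          + (1 - 2 * (2 * ε / (1 + 2 * ε))) * ‖v‖ ^ 2)
      = (2 / (1 + 2 * ε)) ^ 2 * (ε ^ 2 * ‖v‖ ^ 2 - ‖w‖ ^ 2) := by
  have hnorm : ‖(2 : ℝ) • w + v‖ ^ 2 = 4 * ‖w‖ ^ 2 + 4 * ⟪w, v⟫ + ‖v‖ ^ 2 := by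
    rw [norm_add_sq_real, norm_smul, real_inner_smul_left]
    norm_num
    ring
  rw [norm_smul, mul_pow, Real.norm_eq_abs, sq_abs, hnorm, real_inner_smul_left,
    inner_add_left, real_inner_smul_left, real_inner_self_eq_norm_sq]
  field_simp
  ring

lemma norm_sq_le_iff_averaged_ineq_of_reflection (ε : ℝ) (hc : 0 < 1 + 2 * ε) (w v : E) :
    ‖w‖ ^ 2 ≤ ε ^ 2 * ‖v‖ ^ 2 ↔
      ‖(1 / (1 + 2 * ε)) • ((2 : ℝ) • w + v)‖ ^ 2
          + (1 - 2 * (2 * ε / (1 + 2 * ε))) * ‖v‖ ^ 2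
        ≤ 2 * (1 - 2 * ε / (1 + 2 * ε)) * ⟪(1 / (1 + 2 * ε)) • ((2 : ℝ) • w + v), v⟫ := by
  rw [← sub_nonneg, ← sub_nonneg (b := _ + _), averaged_slack_eq_of_reflection ε hc.ne' w v,
    mul_nonneg_iff_of_pos_left (by positivity)]

end InnerProductSpace

theorem assumptionA_iff_reflected_averaged {d : ℕ}
    (H : EuclideanSpace ℝ (Fin d) → EuclideanSpace ℝ (Fin d))
    (ε : ℝ) (hε : 0 ≤ ε) :
    (∀ x y, ‖(H x - x) - (H y - y)‖ ^ 2 ≤ ε ^ 2 * ‖x - y‖ ^ 2) ↔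
      Averaged (2 * ε / (1 + 2 * ε)) (fun x => (1 / (1 + 2 * ε)) • (2 • H x - x)) := by
  refine forall₂_congr fun x y => ?_
  have hG : (1 / (1 + 2 * ε)) • (2 • H x - x) - (1 / (1 + 2 * ε)) • (2 • H y - y)
      = (1 / (1 + 2 * ε)) • ((2 : ℝ) • ((H x - x) - (H y - y)) + (x - y)) := by
    module
  rw [hG]
  exact norm_sq_le_iff_averaged_ineq_of_reflection ε (by linarith) _ _
end

section
/- Let H : ℝ^d → ℝ^d satisfy ‖(H-I)(x) - (H-I)(y)‖ ≤ ε‖x-y‖ for all x, y with ε ≥ 0, and let f : ℝ^d → ℝ be μ-strongly convex (μ > 0), closed, and proper, α > 0. Then T = (1/2)I + (1/2)(2H - I)(2·Prox_{αf} - I) satisfies ‖T(x) - T(y)‖ ≤ ((1 + ε + εαμ + 2ε²αμ)/(1 + αμ + 2εαμ)) ‖x - y‖ for all x, y ∈ ℝ^d. -/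
set_option maxHeartbeats 1000000


private lemma pnp_comb_sq {E : Type*} [NormedAddCommGroup E] [InnerProductSpace ℝ E]
    (a b : E) (θ : ℝ) (h0 : 0 ≤ θ) (h1 : θ ≤ 1) :
    ‖θ • a + (1 - θ) • b‖ ^ 2
      = θ * ‖a‖ ^ 2 + (1 - θ) * ‖b‖ ^ 2 - θ * (1 - θ) * ‖a - b‖ ^ 2 := by
  rw [norm_add_sq_real, norm_smul, norm_smul, real_inner_smul_left, real_inner_smul_right,
    norm_sub_sq_real, Real.norm_eq_abs, Real.norm_eq_abs, abs_of_nonneg h0,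
    abs_of_nonneg (by linarith : (0:ℝ) ≤ 1 - θ)]
  ring

private lemma pnp_poly (a r e s : ℝ) (ha : 0 ≤ a) (he : 0 ≤ e) (hs : 0 < s)
    (hr : (1+s)*a ≤ r) :
    e^2*(1+s+2*e*s)^2*(r^2-4*s*a^2) ≤ ((1+e+e*s+2*e^2*s)*r-(1+s+2*e*s)*a)^2 := by
  have hA : (0:ℝ) ≤ 1+2*e+2*e*s+4*e^2*s := by positivity
  have h1 : 0 ≤ (1+2*e+2*e*s+4*e^2*s) * (r - (1+s)*a - 2*e*s*a)^2 :=
    mul_nonneg hA (sq_nonneg _)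
  have h2 : 0 ≤ (2*e+4*e*s+2*e*s^2+8*e^2*s+8*e^2*s^2+8*e^3*s^2) * (a*(r-(1+s)*a)) := by
    have : (0:ℝ) ≤ 2*e+4*e*s+2*e*s^2+8*e^2*s+8*e^2*s^2+8*e^3*s^2 := by positivity
    exact mul_nonneg this (mul_nonneg ha (by linarith))
  nlinarith [h1, h2]

private lemma pnp_limit (M t : ℝ) (h : ∀ θ : ℝ, 0 < θ → θ < 1 → M * (1 - θ) ≤ t) :
    M ≤ t := by
  by_contra hc
  push_neg at hc
  have h12 := h (1/2) (by norm_num) (by norm_num)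
  have hM0 : 0 < M := by linarith
  have hθ := h ((M - t)/(2*M)) (div_pos (by linarith) (by linarith))
    (by rw [div_lt_one (by linarith)]; linarith)
  have heq : M * (1 - (M - t)/(2*M)) = (M + t)/2 := by
    field_simp
    ring
  rw [heq] at hθ
  linarith

theorem pnp_drs_contraction {d : ℕ}
    (H : EuclideanSpace ℝ (Fin d) → EuclideanSpace ℝ (Fin d)) (ε : ℝ) (hε : 0 ≤ ε)
    (hH : ∀ x y, ‖(H x - x) - (H y - y)‖ ≤ ε * ‖x - y‖)
    (f : EuclideanSpace ℝ (Fin d) → ℝ) (μ α : ℝ) (hμ : 0 < μ) (hα : 0 < α)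
    (hsc : ConvexOn ℝ Set.univ (fun x => f x - μ / 2 * ‖x‖ ^ 2))
    (hcl : LowerSemicontinuous f)
    (prox : EuclideanSpace ℝ (Fin d) → EuclideanSpace ℝ (Fin d))
    (hprox : ∀ z x, α * f (prox z) + (1 / 2) * ‖prox z - z‖ ^ 2 ≤
      α * f x + (1 / 2) * ‖x - z‖ ^ 2)
    (T : EuclideanSpace ℝ (Fin d) → EuclideanSpace ℝ (Fin d))
    (hT : ∀ z, T z = (1 / 2 : ℝ) • z +
      (1 / 2 : ℝ) • (2 • H (2 • prox z - z) - (2 • prox z - z))) :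
    ∀ x y, ‖T x - T y‖ ≤
      ((1 + ε + ε * α * μ + 2 * ε ^ 2 * α * μ) / (1 + α * μ + 2 * ε * α * μ)) * ‖x - y‖ := by
  have hs : 0 < α * μ := mul_pos hα hμ
  -- Step A : perturbed optimality inequality
  have step : ∀ z w : EuclideanSpace ℝ (Fin d), ∀ θ : ℝ, 0 < θ → θ < 1 →
      α * f (prox z) + (1/2) * ‖prox z - z‖^2
        + ((1 + α*μ)/2) * (1-θ) * ‖w - prox z‖^2
        ≤ α * f w + (1/2) * ‖w - z‖^2 := by
    intro z w θ hθ0 hθ1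
    set pz := prox z with hpz
    have hconv := hsc.2 (Set.mem_univ w) (Set.mem_univ pz) hθ0.le
      (by linarith : (0:ℝ) ≤ 1 - θ) (by ring)
    simp only [smul_eq_mul] at hconv
    have hm1 := pnp_comb_sq w pz θ hθ0.le hθ1.le
    have hmz : (θ • w + (1-θ) • pz) - z = θ • (w - z) + (1-θ) • (pz - z) := by
      rw [smul_sub, smul_sub]; module
    have hm2 : ‖(θ • w + (1-θ) • pz) - z‖^2
        = θ * ‖w - z‖^2 + (1-θ) * ‖pz - z‖^2 - θ*(1-θ)*‖w - pz‖^2 := by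
      rw [hmz, pnp_comb_sq (w - z) (pz - z) θ hθ0.le hθ1.le]
      have h3 : (w - z) - (pz - z) = w - pz := by abel
      rw [h3]
    have hf : f (θ • w + (1-θ) • pz)
        ≤ θ * f w + (1-θ) * f pz - μ/2 * (θ*(1-θ)*‖w - pz‖^2) := by
      nlinarith [hconv, hm1]
    have hq := hprox z (θ • w + (1-θ) • pz)
    have hmain : θ * (α * f pz + (1/2) * ‖pz - z‖^2
          + ((1 + α*μ)/2) * (1-θ) * ‖w - pz‖^2)
        ≤ θ * (α * f w + (1/2) * ‖w - z‖^2) := by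
      nlinarith [hq, hm2, mul_le_mul_of_nonneg_left hf hα.le]
    have := (mul_le_mul_iff_right₀ hθ0).mp hmain
    linarith
  intro x y
  set p := prox x with hp
  set q := prox y with hq
  clear_value p q
  -- Step B : strong monotonicity of prox
  have hsum : ∀ θ : ℝ, 0 < θ → θ < 1 →
      (1 + α*μ) * (1-θ) * ‖p - q‖^2 ≤ (inner ℝ (p - q) (x - y) : ℝ) := by
    intro θ h0 h1
    have ha := step x q θ h0 h1
    have hb := step y p θ h0 h1
    rw [← hp] at ha
    rw [← hq] at hb
    have hrev : ‖q - p‖ = ‖p - q‖ := norm_sub_rev _ _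
    rw [hrev] at ha
    have hinner : ‖q - x‖^2 - ‖p - x‖^2 + ‖p - y‖^2 - ‖q - y‖^2
        = 2 * (inner ℝ (p - q) (x - y) : ℝ) := by
      simp only [norm_sub_sq_real, inner_sub_left, inner_sub_right,
        real_inner_self_eq_norm_sq, real_inner_comm p x, real_inner_comm q x,
        real_inner_comm p y, real_inner_comm q y]
      ring
    linarith
  have key : (1 + α*μ) * ‖p - q‖^2 ≤ (inner ℝ (p - q) (x - y) : ℝ) :=
    pnp_limit _ _ (fun θ h0 h1 => by have := hsum θ h0 h1; linarith)
  -- Step C : decomposition of T x - T y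
  have hTd : T x - T y = (p - q) +
      ((H (2 • p - x) - (2 • p - x)) - (H (2 • q - y) - (2 • q - y))) := by
    rw [hT x, hT y, ← hp, ← hq]
    simp only [two_smul]
    module
  have hTb : ‖T x - T y‖ ≤ ‖p - q‖ + ε * ‖(2 • p - x) - (2 • q - y)‖ := by
    rw [hTd]
    exact (norm_add_le _ _).trans (add_le_add le_rfl (hH _ _))
  -- Step D : scalar analysis
  have hR : (2 • p - x) - (2 • q - y) = ((p - q) + (p - q)) - (x - y) := by
    simp only [two_smul]; abel
  have hEsq : ‖(2 • p - x) - (2 • q - y)‖^2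
      = 4*‖p - q‖^2 - 4*(inner ℝ (p - q) (x - y) : ℝ) + ‖x - y‖^2 := by
    rw [hR, norm_sub_sq_real, norm_add_sq_real, inner_add_left,
      real_inner_self_eq_norm_sq]
    ring
  have hCS : (inner ℝ (p - q) (x - y) : ℝ) ≤ ‖p - q‖ * ‖x - y‖ := real_inner_le_norm _ _
  have har : (1 + α*μ) * ‖p - q‖ ≤ ‖x - y‖ := by
    rcases eq_or_lt_of_le (norm_nonneg (p - q)) with h | h
    · rw [← h]; simpa using norm_nonneg (x - y)
    · have h2 : ‖p - q‖ * ((1 + α*μ) * ‖p - q‖) ≤ ‖p - q‖ * ‖x - y‖ := by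
        nlinarith [key, hCS]
      exact le_of_mul_le_mul_left h2 h
  have hE2 : ‖(2 • p - x) - (2 • q - y)‖^2 ≤ ‖x - y‖^2 - 4*(α*μ)*‖p - q‖^2 := by
    nlinarith [hEsq, key]
  have hpoly := pnp_poly ‖p - q‖ ‖x - y‖ ε (α*μ) (norm_nonneg _) hε hs har
  have hD : (0:ℝ) < 1 + α*μ + 2*ε*(α*μ) := by positivity
  have hND : 0 ≤ (1 + ε + ε*(α*μ) + 2*ε^2*(α*μ)) * ‖x - y‖
      - (1 + α*μ + 2*ε*(α*μ)) * ‖p - q‖ := by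
    have h1 := mul_le_mul_of_nonneg_left har
      (by positivity : (0:ℝ) ≤ 1 + ε + ε*(α*μ) + 2*ε^2*(α*μ))
    have h2 : 0 ≤ (ε + ε*(α*μ)^2 + 2*ε^2*(α*μ) + 2*ε^2*(α*μ)^2) * ‖p - q‖ := by
      positivity
    nlinarith [h1, h2]
  have hfin : (1 + α*μ + 2*ε*(α*μ)) * (ε * ‖(2 • p - x) - (2 • q - y)‖)
      ≤ (1 + ε + ε*(α*μ) + 2*ε^2*(α*μ)) * ‖x - y‖
        - (1 + α*μ + 2*ε*(α*μ)) * ‖p - q‖ := by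
    have hL : 0 ≤ (1 + α*μ + 2*ε*(α*μ)) * (ε * ‖(2 • p - x) - (2 • q - y)‖) := by
      positivity
    refine le_of_pow_le_pow_left₀ two_ne_zero hND ?_
    nlinarith [hpoly, hE2, mul_nonneg (mul_nonneg hε hε)
      (mul_pos (mul_pos hD hD) hD).le, sq_nonneg ε]
  rw [div_mul_eq_mul_div, le_div_iff₀ (by nlinarith : (0:ℝ) < 1 + α*μ + 2*ε*α*μ)]
  nlinarith [mul_le_mul_of_nonneg_right hTb hD.le, hfin]
end

section
/- Let f be μ-strongly convex, closed, proper on ℝ^d (μ > 0), H : ℝ^d → ℝ^d satisfy ‖(H-I)(x) - (H-I)(y)‖ ≤ ε‖x-y‖ for all x, y with 0 ≤ ε < 1, and α > ε/((1+ε-2ε²)μ). Then the operator T = (1/2)I + (1/2)(2H-I)(2Prox_{αf}-I) is a contraction, and if T has a fixed point z*, the iterates z^{k+1} = T(z^k) converge to z* geometrically from any starting point. -/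
open scoped RealInnerProductSpace

lemma pnp_aux_le_zero {A C : ℝ} (hC : 0 ≤ C) (h : ∀ t : ℝ, 0 < t → t ≤ 1 → A ≤ t * C) :
    A ≤ 0 := by
  by_contra hA
  push_neg at hA
  have ht0 : 0 < min 1 (A / (2 * C + 2)) := lt_min one_pos (by positivity)
  have h1 := h _ ht0 (min_le_left _ _)
  have h2 : min 1 (A / (2 * C + 2)) * C ≤ A / (2 * C + 2) * C :=
    mul_le_mul_of_nonneg_right (min_le_right _ _) hC
  have h3 : A / (2 * C + 2) * C < A := by
    rw [div_mul_eq_mul_div, div_lt_iff₀ (by positivity)]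
    nlinarith
  linarith

lemma pnp_expand {E : Type*} [NormedAddCommGroup E] [InnerProductSpace ℝ E] (a b : ℝ) (x y : E) :
    ‖a • x + b • y‖ ^ 2 = a ^ 2 * ‖x‖ ^ 2 + 2 * (a * b) * ⟪x, y⟫ + b ^ 2 * ‖y‖ ^ 2 := by
  rw [@norm_add_sq_real, norm_smul, norm_smul, real_inner_smul_left, real_inner_smul_right]
  simp [mul_pow, sq_abs]; ring

lemma pnp_caseB (c e K q w s : ℝ) (hc : 0 < c) (he : 0 ≤ e) (hq : 0 ≤ q) (hs : 0 ≤ s)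
    (hK : K = |1 - c|) (hKc : 4 * e * c ≤ K)
    (hw2 : w ^ 2 ≤ s ^ 2 - 4 * c * q ^ 2) (hqs : (1 + c) * q ≤ s) :
    ((1 + c) * (q + e * w)) ^ 2 ≤ ((1 + e * K) * s) ^ 2 := by
  have hK0 : 0 ≤ K := hK ▸ abs_nonneg _
  have hmq : ((1 + c) * q) ^ 2 ≤ s ^ 2 := by
    nlinarith [mul_nonneg (by positivity : (0:ℝ) ≤ 1 + c) hq]
  have t1 : 0 ≤ (1 + e * K) * e * (1 + c) ^ 2 * ((s ^ 2 - 4 * c * q ^ 2) - w ^ 2) := by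
    apply mul_nonneg (by positivity) (by linarith)
  have t2 : 0 ≤ (1 + e * K) * (K - 4 * c * e) * (s ^ 2 - (1 + c) ^ 2 * q ^ 2) := by
    apply mul_nonneg (mul_nonneg (by positivity) (by linarith)) (by nlinarith [hmq])
  have t3 : 0 ≤ (1 + c) ^ 2 * (e * (K * q - w) ^ 2) := by positivity
  have key : K * (((1 + c) * (q + e * w)) ^ 2) ≤ K * (((1 + e * K) * s) ^ 2) := by
    rcases le_or_gt c 1 with h | h
    · have hKv : K = 1 - c := by rw [hK, abs_of_nonneg (by linarith)]
      rw [hKv] at t1 t2 t3 ⊢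
      nlinarith [t1, t2, t3]
    · have hKv : K = c - 1 := by rw [hK, abs_of_neg (by linarith)]; ring
      rw [hKv] at t1 t2 t3 ⊢
      nlinarith [t1, t2, t3]
  rcases eq_or_lt_of_le hK0 with h0 | h0
  · have habs : |1 - c| = 0 := by rw [← hK, ← h0]
    have he0 : e = 0 := by
      have hKz : K = 0 := h0.symm
      rcases eq_or_lt_of_le he with h' | h'
      · exact h'.symm
      · exfalso; nlinarith
    have e1 : ((1 + c) * (q + e * w)) ^ 2 = ((1 + c) * q) ^ 2 := by rw [he0]; ring
    have e2 : ((1 + e * K) * s) ^ 2 = s ^ 2 := by rw [he0]; ring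
    linarith [hmq, e1.le, e2.ge]
  · exact le_of_mul_le_mul_left key h0

lemma pnp_scalar (c e : ℝ) (hc : 0 < c) (he : 0 ≤ e) (he1 : e < 1)
    (hεc : e < c * (1 + e - 2 * e ^ 2)) :
    ∃ δ : ℝ, 0 ≤ δ ∧ δ < 1 ∧ ∀ q w s : ℝ, 0 ≤ q → 0 ≤ w → 0 ≤ s →
      w ^ 2 ≤ s ^ 2 - 4 * c * q ^ 2 → (1 + c) * q ≤ s → q + e * w ≤ δ * s := by
  by_cases hcase : |1 - c| ≤ 4 * e * c
  · refine ⟨Real.sqrt (1 / (4 * c) + e ^ 2), Real.sqrt_nonneg _, ?_, ?_⟩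
    · have harg : 1 / (4 * c) + e ^ 2 < 1 := by
        rw [div_add' _ _ _ (by positivity), div_lt_one (by positivity)]
        have hKc : 1 - c ≤ 4 * e * c := le_trans (le_abs_self _) hcase
        rcases le_or_gt e (1/3) with h | h
        · nlinarith [mul_le_mul_of_nonneg_left hKc (by nlinarith : (0:ℝ) ≤ 1 - e ^ 2)]
        · nlinarith [mul_lt_mul_of_pos_left hεc (by nlinarith : (0:ℝ) < 4 * (1 - e ^ 2))]
      calc Real.sqrt (1 / (4 * c) + e ^ 2) < Real.sqrt 1 :=
            Real.sqrt_lt_sqrt (by positivity) harg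
        _ = 1 := Real.sqrt_one
    · intro q w s hq hw hs hw2 hqs
      have hA : 4 * c * (q + e * w) ^ 2 ≤ (1 + 4 * c * e ^ 2) * s ^ 2 := by
        nlinarith [sq_nonneg (w - 4 * e * c * q),
          mul_nonneg (by positivity : (0:ℝ) ≤ 1 + 4 * c * e ^ 2)
            (by linarith : (0:ℝ) ≤ s ^ 2 - 4 * c * q ^ 2 - w ^ 2)]
      have h1 : (q + e * w) ^ 2 ≤ (1 / (4 * c) + e ^ 2) * s ^ 2 := by
        have heq : 1 / (4 * c) + e ^ 2 = (1 + 4 * c * e ^ 2) / (4 * c) := by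
          field_simp
        rw [heq, div_mul_eq_mul_div, le_div_iff₀ (by positivity)]
        nlinarith [hA]
      calc q + e * w = Real.sqrt ((q + e * w) ^ 2) := (Real.sqrt_sq (by positivity)).symm
        _ ≤ Real.sqrt ((1 / (4 * c) + e ^ 2) * s ^ 2) := Real.sqrt_le_sqrt h1
        _ = Real.sqrt (1 / (4 * c) + e ^ 2) * s := by
            rw [Real.sqrt_mul (by positivity), Real.sqrt_sq hs]
  · push_neg at hcase
    refine ⟨(1 + e * |1 - c|) / (1 + c), by positivity, ?_, ?_⟩
    · rw [div_lt_one (by positivity)]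
      rcases le_or_gt c 1 with h | h
      · rw [abs_of_nonneg (by linarith)]
        nlinarith
      · rw [abs_of_neg (by linarith)]
        nlinarith
    · intro q w s hq hw hs hw2 hqs
      have hB := pnp_caseB c e (|1 - c|) q w s hc he hq hs rfl hcase.le hw2 hqs
      have h2 : (1 + c) * (q + e * w) ≤ (1 + e * |1 - c|) * s := by
        have l := Real.sqrt_le_sqrt hB
        rw [Real.sqrt_sq (by positivity), Real.sqrt_sq (by positivity)] at l
        exact l
      rw [div_mul_eq_mul_div, le_div_iff₀ (by positivity)]
      nlinarith [h2]

set_option maxHeartbeats 1000000 in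
theorem pnp_drs_convergence {d : ℕ}
    (f : EuclideanSpace ℝ (Fin d) → ℝ) (μ α ε : ℝ) (hμ : 0 < μ)
    (hε0 : 0 ≤ ε) (hε1 : ε < 1) (hα : ε / ((1 + ε - 2 * ε ^ 2) * μ) < α)
    (hsc : ConvexOn ℝ Set.univ (fun x => f x - μ / 2 * ‖x‖ ^ 2))
    (hcl : LowerSemicontinuous f)
    (H : EuclideanSpace ℝ (Fin d) → EuclideanSpace ℝ (Fin d))
    (hH : ∀ x y, ‖(H x - x) - (H y - y)‖ ≤ ε * ‖x - y‖)
    (prox : EuclideanSpace ℝ (Fin d) → EuclideanSpace ℝ (Fin d))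
    (hprox : ∀ z w, α * f (prox z) + (1 / 2) * ‖prox z - z‖ ^ 2 ≤
      α * f w + (1 / 2) * ‖w - z‖ ^ 2)
    (T : EuclideanSpace ℝ (Fin d) → EuclideanSpace ℝ (Fin d))
    (hT : ∀ z, T z = (1 / 2 : ℝ) • z +
      (1 / 2 : ℝ) • (2 • H (2 • prox z - z) - (2 • prox z - z))) :
    (∃ δ : ℝ, 0 ≤ δ ∧ δ < 1 ∧ ∀ x y, ‖T x - T y‖ ≤ δ * ‖x - y‖) ∧
      ∀ zstar, T zstar = zstar →
        ∀ z : ℕ → EuclideanSpace ℝ (Fin d), (∀ k, z (k + 1) = T (z k)) →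
          (∃ δ : ℝ, 0 ≤ δ ∧ δ < 1 ∧ ∀ k, ‖z k - zstar‖ ≤ δ ^ k * ‖z 0 - zstar‖) ∧
            Filter.Tendsto z Filter.atTop (nhds zstar) := by
  have h1e : (0:ℝ) < 1 + ε - 2 * ε ^ 2 := by nlinarith
  have hα0 : 0 < α := lt_of_le_of_lt (div_nonneg hε0 (le_of_lt (mul_pos h1e hμ))) hα
  have hc : 0 < α * μ := mul_pos hα0 hμ
  have hεc : ε < α * μ * (1 + ε - 2 * ε ^ 2) := by
    rw [div_lt_iff₀ (mul_pos h1e hμ)] at hα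
    nlinarith [hα]
  -- strong convexity two-point bound
  have hcomb : ∀ (x y : EuclideanSpace ℝ (Fin d)) (t : ℝ), 0 ≤ t → t ≤ 1 →
      f (x + t • (y - x)) ≤ (1 - t) * f x + t * f y - μ / 2 * (t * (1 - t)) * ‖x - y‖ ^ 2 := by
    intro x y t ht0 ht1
    have h := hsc.2 (Set.mem_univ x) (Set.mem_univ y) (by linarith : (0:ℝ) ≤ 1 - t) ht0 (by ring)
    simp only [smul_eq_mul] at h
    have hxy : x + t • (y - x) = (1 - t) • x + t • y := by module
    rw [hxy]
    have e1 := pnp_expand (1 - t) t x y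
    have e2 : ‖x - y‖ ^ 2 = ‖x‖ ^ 2 - 2 * ⟪x, y⟫ + ‖y‖ ^ 2 := norm_sub_sq_real x y
    have key : (1 - t) * (f x - μ / 2 * ‖x‖ ^ 2) + t * (f y - μ / 2 * ‖y‖ ^ 2)
        + μ / 2 * ‖(1 - t) • x + t • y‖ ^ 2
        = (1 - t) * f x + t * f y - μ / 2 * (t * (1 - t)) * ‖x - y‖ ^ 2 := by
      linear_combination (μ / 2) * e1 + (μ / 2 * t * (1 - t)) * e2
    linarith [h, key]
  -- strong monotonicity of the prox
  have half : ∀ z z', α * f (prox z) + (α * μ / 2) * ‖prox z - prox z'‖ ^ 2 ≤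
      α * f (prox z') + ⟪prox z - z, prox z' - prox z⟫ := by
    intro z z'
    set u := prox z with hu
    set u' := prox z' with hu'
    have key : ∀ t : ℝ, 0 < t → t ≤ 1 →
        α * f u + (α * μ / 2) * ‖u - u'‖ ^ 2 - α * f u' - ⟪u - z, u' - u⟫ ≤
          t * ((1 + α * μ) / 2 * ‖u - u'‖ ^ 2) := by
      intro t ht0 ht1
      have hp := hprox z (u + t • (u' - u))
      have hf := hcomb u u' t ht0.le ht1
      have hf' := mul_le_mul_of_nonneg_left hf hα0.le
      have e3 : ‖u + t • (u' - u) - z‖ ^ 2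
          = ‖u - z‖ ^ 2 + 2 * t * ⟪u - z, u' - u⟫ + t ^ 2 * ‖u - u'‖ ^ 2 := by
        have hr : u + t • (u' - u) - z = (u - z) + t • (u' - u) := by module
        rw [hr, @norm_add_sq_real, real_inner_smul_right, norm_smul, Real.norm_eq_abs, mul_pow,
          sq_abs, norm_sub_rev u' u]
        ring
      have hmul : t * (α * f u + (α * μ / 2) * ‖u - u'‖ ^ 2 - α * f u' - ⟪u - z, u' - u⟫)
          ≤ t * (t * ((1 + α * μ) / 2 * ‖u - u'‖ ^ 2)) := by
        nlinarith [hp, hf', e3]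
      exact le_of_mul_le_mul_left (by linarith [hmul]) ht0
    have hC : (0:ℝ) ≤ (1 + α * μ) / 2 * ‖u - u'‖ ^ 2 := by positivity
    have := pnp_aux_le_zero hC key
    linarith
  have hmono : ∀ z z', (1 + α * μ) * ‖prox z - prox z'‖ ^ 2 ≤ ⟪prox z - prox z', z - z'⟫ := by
    intro z z'
    have h1 := half z z'
    have h2 := half z' z
    have hinner : ⟪prox z - z, prox z' - prox z⟫ + ⟪prox z' - z', prox z - prox z'⟫
        = -(‖prox z - prox z'‖ ^ 2) + ⟪prox z - prox z', z - z'⟫ := by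
      simp only [← real_inner_self_eq_norm_sq]
      simp only [inner_sub_left, inner_sub_right]
      rw [real_inner_comm (prox z') (prox z), real_inner_comm z (prox z),
        real_inner_comm z' (prox z'), real_inner_comm (prox z') z, real_inner_comm (prox z) z']
      ring
    rw [norm_sub_rev (prox z') (prox z)] at h2
    nlinarith [h1, h2, hinner]
  -- the contraction factor
  obtain ⟨δ, hδ0, hδ1, hbnd⟩ := pnp_scalar (α * μ) ε hc hε0 hε1 hεc
  have hcontr : ∀ x y, ‖T x - T y‖ ≤ δ * ‖x - y‖ := by
    intro z z'
    have hTz : ∀ z, T z = prox z + (H (2 • prox z - z) - (2 • prox z - z)) := by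
      intro z; rw [hT z]; module
    set v := 2 • prox z - z with hv
    set v' := 2 • prox z' - z' with hv'
    have hbound : ‖T z - T z'‖ ≤ ‖prox z - prox z'‖ + ε * ‖v - v'‖ := by
      rw [hTz z, hTz z']
      have hsplit : (prox z + (H v - v)) - (prox z' + (H v' - v')) =
          (prox z - prox z') + ((H v - v) - (H v' - v')) := by abel
      rw [hsplit]
      exact le_trans (norm_add_le _ _) (add_le_add le_rfl (hH v v'))
    have hvv : v - v' = (2:ℝ) • (prox z - prox z') + (-1:ℝ) • (z - z') := by
      rw [hv, hv']; module
    have hw2 : ‖v - v'‖ ^ 2 ≤ ‖z - z'‖ ^ 2 - 4 * (α * μ) * ‖prox z - prox z'‖ ^ 2 := by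
      have hexp : ‖v - v'‖ ^ 2 = 4 * ‖prox z - prox z'‖ ^ 2
          - 4 * ⟪prox z - prox z', z - z'⟫ + ‖z - z'‖ ^ 2 := by
        rw [hvv, pnp_expand]
        ring
      have hm := hmono z z'
      linarith [hexp.le, hexp.ge, hm]
    have hqs : (1 + α * μ) * ‖prox z - prox z'‖ ≤ ‖z - z'‖ := by
      have hm := hmono z z'
      have hcs := real_inner_le_norm (prox z - prox z') (z - z')
      rcases eq_or_lt_of_le (norm_nonneg (prox z - prox z')) with h0 | h0
      · rw [← h0, mul_zero]
        exact norm_nonneg _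
      · have hstep : (1 + α * μ) * ‖prox z - prox z'‖ * ‖prox z - prox z'‖
            ≤ ‖z - z'‖ * ‖prox z - prox z'‖ := by
          calc (1 + α * μ) * ‖prox z - prox z'‖ * ‖prox z - prox z'‖
              = (1 + α * μ) * ‖prox z - prox z'‖ ^ 2 := by ring
            _ ≤ ⟪prox z - prox z', z - z'⟫ := hm
            _ ≤ ‖prox z - prox z'‖ * ‖z - z'‖ := hcs
            _ = ‖z - z'‖ * ‖prox z - prox z'‖ := by ring
        exact le_of_mul_le_mul_right hstep h0
    exact le_trans hbound (hbnd _ _ _ (norm_nonneg _) (norm_nonneg _) (norm_nonneg _) hw2 hqs)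
  refine ⟨⟨δ, hδ0, hδ1, hcontr⟩, ?_⟩
  intro zstar hfix z hz
  have hgeo : ∀ k, ‖z k - zstar‖ ≤ δ ^ k * ‖z 0 - zstar‖ := by
    intro k
    induction k with
    | zero => simp
    | succ n ih =>
      have : ‖z (n + 1) - zstar‖ ≤ δ * ‖z n - zstar‖ := by
        rw [hz n]
        calc ‖T (z n) - zstar‖ = ‖T (z n) - T zstar‖ := by rw [hfix]
          _ ≤ δ * ‖z n - zstar‖ := hcontr _ _
      calc ‖z (n + 1) - zstar‖ ≤ δ * ‖z n - zstar‖ := this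
        _ ≤ δ * (δ ^ n * ‖z 0 - zstar‖) := mul_le_mul_of_nonneg_left ih hδ0
        _ = δ ^ (n + 1) * ‖z 0 - zstar‖ := by ring
  refine ⟨⟨δ, hδ0, hδ1, hgeo⟩, ?_⟩
  have hlim : Filter.Tendsto (fun k => δ ^ k * ‖z 0 - zstar‖) Filter.atTop (nhds 0) := by
    simpa using (tendsto_pow_atTop_nhds_zero_of_lt_one hδ0 hδ1).mul_const ‖z 0 - zstar‖
  rw [tendsto_iff_dist_tendsto_zero]
  exact squeeze_zero (fun k => dist_nonneg) (fun k => by rw [dist_eq_norm]; exact hgeo k) hlim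
end

section
/- Let y ≥ 0 and α > 0, and define ℓ(x) = -y·log(x) + x for x > 0 (with ℓ(0) = 0 if y = 0, and ℓ(x) = +∞ otherwise). Then for any real x₀, the minimizer of αℓ(x) + (1/2)(x - x₀)² over x equals (1/2)(x₀ - α + √((x₀ - α)² + 4αy)). -/
/-!
The point `p` is the nonnegative root of `p ^ 2 - (x₀ - α) p - α y = 0`, i.e. the stationarity
condition `α (1 - y / p) + p - x₀ = 0` cleared of denominators. With `c = p - x₀ + α ≥ 0` and
`α y = p c`, the objective `F x = α ℓ x + (x - x₀)² / 2` satisfies the exact identity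
`F x - F p - (x - p)² / 2 = c (x - p) - α y (log x - log p)`, whose right side is nonnegative by
`log t ≤ t - 1`. Hence `F p + (x - p)² / 2 ≤ F x` on the domain, which gives both minimality and
uniqueness.
-/

open Real

lemma pos_or_and_eq_zero_iff {x y : ℝ} :
    (0 < x ∨ (y = 0 ∧ x = 0)) ↔ 0 ≤ x ∧ (y ≠ 0 → 0 < x) := by
  constructor
  · rintro (hx | ⟨hy, rfl⟩)
    · exact ⟨hx.le, fun _ => hx⟩
    · exact ⟨le_rfl, fun h => absurd hy h⟩
  · rintro ⟨hx, hpos⟩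
    by_cases hy : y = 0
    · exact hx.lt_or_eq.imp id fun h => ⟨hy, h.symm⟩
    · exact Or.inl (hpos hy)

section QuadraticRoot

variable {a c : ℝ}

lemma abs_le_sqrt_sq_add (hc : 0 ≤ c) : |a| ≤ √(a ^ 2 + 4 * c) :=
  abs_le_sqrt (by linarith)

lemma half_add_sqrt_nonneg (hc : 0 ≤ c) : 0 ≤ 1 / 2 * (a + √(a ^ 2 + 4 * c)) := by
  have := abs_le_sqrt_sq_add (a := a) hc
  linarith [neg_abs_le a]

lemma half_add_sqrt_sub_nonneg (hc : 0 ≤ c) : 0 ≤ 1 / 2 * (a + √(a ^ 2 + 4 * c)) - a := by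
  have := abs_le_sqrt_sq_add (a := a) hc
  linarith [le_abs_self a]

lemma half_add_sqrt_mul_sub (hc : 0 ≤ c) :
    1 / 2 * (a + √(a ^ 2 + 4 * c)) * (1 / 2 * (a + √(a ^ 2 + 4 * c)) - a) = c := by
  have hsq : √(a ^ 2 + 4 * c) ^ 2 = a ^ 2 + 4 * c := sq_sqrt (by positivity)
  linear_combination hsq / 4

end QuadraticRoot

lemma mul_log_sub_log_le_sub {p x : ℝ} (hp : 0 < p) (hx : 0 < x) :
    p * (log x - log p) ≤ x - p := by
  have h := log_le_sub_one_of_pos (div_pos hx hp)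
  rw [log_div hx.ne' hp.ne'] at h
  calc p * (log x - log p) ≤ p * (x / p - 1) := mul_le_mul_of_nonneg_left h hp.le
    _ = x - p := by field_simp

lemma mul_log_sub_log_le_of_mul_eq {k c p x : ℝ} (hc : 0 ≤ c) (hp : 0 ≤ p) (hpc : p * c = k)
    (hx : 0 ≤ x) (hxk : k ≠ 0 → 0 < x) : k * (log x - log p) ≤ c * (x - p) := by
  by_cases hk : k = 0
  · subst hk
    nlinarith [mul_nonneg hc hx]
  · have hp_pos : 0 < p := hp.lt_of_ne (by rintro rfl; simp [← hpc] at hk)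
    calc k * (log x - log p) = c * (p * (log x - log p)) := by rw [← hpc]; ring
      _ ≤ c * (x - p) := mul_le_mul_of_nonneg_left (mul_log_sub_log_le_sub hp_pos (hxk hk)) hc

lemma prox_objective_sub_sub_sq (y α x₀ p x : ℝ) :
    α * (-y * log x + x) + 1 / 2 * (x - x₀) ^ 2 - (α * (-y * log p + p) + 1 / 2 * (p - x₀) ^ 2)
      - 1 / 2 * (x - p) ^ 2 = (p - x₀ + α) * (x - p) - α * y * (log x - log p) := by
  ring

lemma eq_of_le_of_add_sq_le {F : ℝ → ℝ} {p q : ℝ} (hgrowth : F p + 1 / 2 * (q - p) ^ 2 ≤ F q)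
    (hq : F q ≤ F p) : q = p := by
  have : (q - p) ^ 2 = 0 := le_antisymm (by linarith) (sq_nonneg _)
  exact sub_eq_zero.mp (pow_eq_zero_iff two_ne_zero |>.mp this)

/-- `Real.log 0 = 0`, so `ℓ 0 = 0`: this is the convention `ℓ(0) = 0` when `y = 0`. -/
theorem poisson_prox_formula (y α x₀ : ℝ) (hy : 0 ≤ y) (hα : 0 < α) :
    let ℓ : ℝ → ℝ := fun x => -y * Real.log x + x
    let D : Set ℝ := {x : ℝ | 0 < x ∨ (y = 0 ∧ x = 0)}
    let p : ℝ := (1 / 2) * (x₀ - α + Real.sqrt ((x₀ - α) ^ 2 + 4 * α * y))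
    p ∈ D ∧ (∀ x ∈ D, α * ℓ p + (1 / 2) * (p - x₀) ^ 2 ≤ α * ℓ x + (1 / 2) * (x - x₀) ^ 2) ∧
      ∀ q ∈ D, (∀ x ∈ D, α * ℓ q + (1 / 2) * (q - x₀) ^ 2 ≤ α * ℓ x + (1 / 2) * (x - x₀) ^ 2) →
        q = p := by
  intro ℓ D p
  have hαy : 0 ≤ α * y := mul_nonneg hα.le hy
  have hp_def : p = 1 / 2 * (x₀ - α + √((x₀ - α) ^ 2 + 4 * (α * y))) := by
    simp only [p, mul_assoc]
  have hp : 0 ≤ p := hp_def ▸ half_add_sqrt_nonneg hαy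
  have hc : 0 ≤ p - x₀ + α := by
    linarith [hp_def ▸ half_add_sqrt_sub_nonneg (a := x₀ - α) hαy]
  have hpc : p * (p - x₀ + α) = α * y := by
    rw [hp_def]
    linear_combination half_add_sqrt_mul_sub (a := x₀ - α) hαy
  have hpD : p ∈ D := pos_or_and_eq_zero_iff.2 ⟨hp, fun hy0 =>
    hp.lt_of_ne fun h => mul_ne_zero hα.ne' hy0 (by rw [← hpc, ← h, zero_mul])⟩
  have hgrowth : ∀ x ∈ D, α * ℓ p + 1 / 2 * (p - x₀) ^ 2 + 1 / 2 * (x - p) ^ 2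
      ≤ α * ℓ x + 1 / 2 * (x - x₀) ^ 2 := by
    intro x hx
    obtain ⟨hx0, hxpos⟩ := pos_or_and_eq_zero_iff.1 hx
    have := mul_log_sub_log_le_of_mul_eq hc hp hpc hx0 fun h => hxpos (right_ne_zero_of_mul h)
    linarith [prox_objective_sub_sub_sq y α x₀ p x]
  refine ⟨hpD, fun x hx => by linarith [hgrowth x hx, sq_nonneg (x - p)], fun q hq hqmin => ?_⟩
  exact eq_of_le_of_add_sq_le (F := fun x => α * ℓ x + 1 / 2 * (x - x₀) ^ 2)
    (hgrowth q hq) (hqmin p hpD)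
end
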